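/- There exist a delay d_I > 0 and a real b > 0 such that Δ_E(i·b) = 0, i.e. the characteristic equation of the linearization at the endemic equilibrium has a purely imaginary root for some positive delay; hence the endemic equilibrium is not asymptotically stable for that delay. -/

import Mathlib

noncomputable section TBEndemicDelay

/-- The characteristic function of the linearization at the endemic
equilibrium of the TB model (`β = 100`, Table parameter values) with delay
`dI`. -/
def ΔE (dI : ℝ) (z : ℂ) : ℂ :=
  z ^ 4 + 15.112395 * z ^ 3 - 12.243801 * z ^ 2 - 28.331139 * z - 0.966336
    + (2 * z ^ 3 + 30.196179 * z ^ 2 + 30.244462 * z + 1.463482)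
      * Complex.exp (-(z * (dI : ℂ)))

/-- the modulus-difference polynomial -/
private def gTB (b : ℝ) : ℝ :=
  (b^4 + 12.243801*b^2 - 0.966336)^2 + (-15.112395*b^3 - 28.331139*b)^2
    - ((-30.196179*b^2 + 1.463482)^2 + (-2*b^3 + 30.244462*b)^2)

private lemma gTB_root : ∃ b : ℝ, 0 < b ∧ gTB b = 0 := by
  have hcont : ContinuousOn gTB (Set.Icc 0 1) := by
    apply Continuous.continuousOn; unfold gTB; continuity
  have h0 : gTB 0 < 0 := by norm_num [gTB]
  have h1 : 0 < gTB 1 := by norm_num [gTB]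
  have := intermediate_value_Icc (by norm_num : (0:ℝ) ≤ 1) hcont
  have hmem : (0:ℝ) ∈ Set.Icc (gTB 0) (gTB 1) := ⟨le_of_lt h0, le_of_lt h1⟩
  obtain ⟨b, hb, hgb⟩ := this hmem
  refine ⟨b, ?_, hgb⟩
  rcases lt_or_eq_of_le hb.1 with h | h
  · exact h
  · exfalso; rw [← h] at hgb; rw [hgb] at h0; exact lt_irrefl 0 h0

/-- There exist a delay `dI > 0` and a real `b > 0` such that `ΔE(i·b) = 0`,
i.e. the characteristic equation at the endemic equilibrium has a purely
imaginary root for some positive delay; hence the endemic equilibrium is not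
asymptotically stable for that delay. -/
theorem tb_endemic_purely_imaginary_root_exists :
    ∃ dI : ℝ, 0 < dI ∧ ∃ b : ℝ, 0 < b ∧ ΔE dI (Complex.I * b) = 0 := by
  obtain ⟨b, hb, hgb⟩ := gTB_root
  set z : ℂ := Complex.I * b with hz
  set P : ℂ := z ^ 4 + 15.112395 * z ^ 3 - 12.243801 * z ^ 2 - 28.331139 * z - 0.966336 with hP
  set Q : ℂ := 2 * z ^ 3 + 30.196179 * z ^ 2 + 30.244462 * z + 1.463482 with hQ
  have hPn : Complex.normSq P = (b^4 + 12.243801*b^2 - 0.966336)^2 + (-15.112395*b^3 - 28.331139*b)^2 := by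
    rw [hP, hz]
    simp [Complex.normSq_apply, Complex.mul_re, Complex.mul_im, pow_succ]
  have hQn : Complex.normSq Q = (-30.196179*b^2 + 1.463482)^2 + (-2*b^3 + 30.244462*b)^2 := by
    rw [hQ, hz]
    simp [Complex.normSq_apply, Complex.mul_re, Complex.mul_im, pow_succ]
  have hEq : Complex.normSq P = Complex.normSq Q := by
    rw [hPn, hQn]; unfold gTB at hgb; linarith
  have hdelta : ∀ dI : ℝ, ΔE dI z = P + Q * Complex.exp (-(z * (dI : ℂ))) := by
    intro dI; rw [ΔE, hP, hQ]
  by_cases hQ0 : Q = 0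
  · -- then P = 0 too, any delay works
    have : Complex.normSq P = 0 := by rw [hEq, hQ0]; simp
    have hP0 : P = 0 := by rwa [Complex.normSq_eq_zero] at this
    exact ⟨1, one_pos, b, hb, by rw [hdelta 1, hP0, hQ0]; ring⟩
  · set w : ℂ := -P / Q with hw
    have hwabs : ‖w‖ = 1 := by
      have : Complex.normSq w = 1 := by
        rw [hw, Complex.normSq_div, Complex.normSq_neg, hEq, div_self]
        exact fun h => hQ0 (Complex.normSq_eq_zero.mp h)
      rw [Complex.norm_def, this, Real.sqrt_one]
    set θ : ℝ := Complex.arg w with hθ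
    have hwexp : Complex.exp (θ * Complex.I) = w := by
      have := Complex.norm_mul_exp_arg_mul_I w
      rw [hwabs] at this; rw [show ((1:ℝ):ℂ) = 1 by norm_num, one_mul] at this; exact this
    set dI : ℝ := (2 * Real.pi - θ) / b with hdI
    have hθle : θ ≤ Real.pi := Complex.arg_le_pi w
    have hdIpos : 0 < dI := by
      apply div_pos _ hb
      have := Real.pi_pos
      linarith
    refine ⟨dI, hdIpos, b, hb, ?_⟩
    have hbd : (b : ℝ) * dI = 2 * Real.pi - θ := by
      rw [hdI, mul_div_cancel₀ _ (ne_of_gt hb)]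
    have hexp : Complex.exp (-(z * (dI : ℂ))) = w := by
      have h1 : -(z * (dI : ℂ)) = ((θ : ℂ) - 2 * Real.pi) * Complex.I := by
        rw [hz]
        have : ((b : ℂ) * (dI : ℂ)) = ((2 * Real.pi - θ : ℝ) : ℂ) := by
          push_cast [← hbd]; ring
        push_cast at this ⊢
        rw [show -(Complex.I * (b:ℂ) * (dI:ℂ)) = -((b:ℂ) * (dI:ℂ)) * Complex.I by ring, this]
        push_cast; ring
      rw [h1, sub_mul, Complex.exp_sub, hwexp]
      rw [show ((2 : ℂ) * (Real.pi : ℂ) * Complex.I) = 2 * Real.pi * Complex.I by ring,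
        Complex.exp_two_pi_mul_I]
      simp
    rw [show ΔE dI (Complex.I * b) = ΔE dI z from rfl, hdelta dI, hexp, hw]
    field_simp
    ring
  
end TBEndemicDelay
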